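/- Let G₂(x,t) = x⁴ + 6(t² + 1)x² + 5t⁴ + 18t² − 3, H₂(x,t) = x⁴ + 2(t² − 3)x² + (t² + 5)(t² − 3), D₂(x,t) = x⁶ + 3(t² + 1)x⁴ + 3(t² − 3)²x² + t⁶ + 27t⁴ + 99t² + 9, and for real parameters α, β set Ĝ₂(x,t;α,β) = G₂(x,t) − 2αt + 2βx, Ĥ₂(x,t;α,β) = t·H₂(x,t) + α(x² − t² + 1) + 2βxt, and D̂₂(x,t;α,β) = D₂(x,t) + 2αt(3x² − t² − 9) − 2βx(x² − 3t² − 3) + α² + β². Then for all real α, β, at every point (x,t) ∈ ℝ² where D̂₂(x,t;α,β) ≠ 0, the function ψ̂₂(x,t;α,β) = (1 − 12·(Ĝ₂(x,t;α,β) + i·Ĥ₂(x,t;α,β))/D̂₂(x,t;α,β))·exp(it/2) satisfies the focusing nonlinear Schrödinger equation i·ψ_t + ψ_xx + (1/2)|ψ|²·ψ = 0. -/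

import Mathlib

/-- Partial derivative in the first (space) variable, for complex-valued functions. -/
noncomputable def dXC (f : ℝ → ℝ → ℂ) : ℝ → ℝ → ℂ := fun x t => deriv (fun x' => f x' t) x

/-- Partial derivative in the second (time) variable, for complex-valued functions. -/
noncomputable def dTC (f : ℝ → ℝ → ℂ) : ℝ → ℝ → ℂ := fun x t => deriv (fun t' => f x t') t

/-- The focusing nonlinear Schrödinger equation `i ψ_t + ψ_xx + (1/2)|ψ|² ψ = 0`. -/
def IsFocusingNLSSolution (ψ : ℝ → ℝ → ℂ) : Prop :=
  ∀ x t : ℝ,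
    Complex.I * dTC ψ x t + dXC (dXC ψ) x t
      + (1 / 2) * ((‖ψ x t‖ : ℂ)) ^ 2 * ψ x t = 0

/-- `G₂(x,t) = x⁴ + 6(t²+1)x² + 5t⁴ + 18t² − 3`. -/
noncomputable def G2 (x t : ℝ) : ℝ :=
  x ^ 4 + 6 * (t ^ 2 + 1) * x ^ 2 + 5 * t ^ 4 + 18 * t ^ 2 - 3

/-- `H₂(x,t) = x⁴ + 2(t²−3)x² + (t²+5)(t²−3)`. -/
noncomputable def H2 (x t : ℝ) : ℝ :=
  x ^ 4 + 2 * (t ^ 2 - 3) * x ^ 2 + (t ^ 2 + 5) * (t ^ 2 - 3)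

/-- `D₂(x,t) = x⁶ + 3(t²+1)x⁴ + 3(t²−3)²x² + t⁶ + 27t⁴ + 99t² + 9`. -/
noncomputable def D2 (x t : ℝ) : ℝ :=
  x ^ 6 + 3 * (t ^ 2 + 1) * x ^ 4 + 3 * (t ^ 2 - 3) ^ 2 * x ^ 2
    + t ^ 6 + 27 * t ^ 4 + 99 * t ^ 2 + 9

/-- The second rational solution `ψ₂` of the focusing NLS equation. -/
noncomputable def psi2 (x t : ℝ) : ℂ :=
  (1 - 12 * (((G2 x t : ℝ) : ℂ) + Complex.I * (t : ℂ) * ((H2 x t : ℝ) : ℂ))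
      / ((D2 x t : ℝ) : ℂ)) * Complex.exp (Complex.I * (t : ℂ) / 2)

/-- `Ĝ₂(x,t;α,β) = G₂(x,t) − 2αt + 2βx`. -/
noncomputable def G2hat (α β x t : ℝ) : ℝ := G2 x t - 2 * α * t + 2 * β * x

/-- `Ĥ₂(x,t;α,β) = t·H₂(x,t) + α(x² − t² + 1) + 2βxt`. -/
noncomputable def H2hat (α β x t : ℝ) : ℝ :=
  t * H2 x t + α * (x ^ 2 - t ^ 2 + 1) + 2 * β * x * t

/-- `D̂₂(x,t;α,β) = D₂(x,t) + 2αt(3x² − t² − 9) − 2βx(x² − 3t² − 3) + α² + β²`. -/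
noncomputable def D2hat (α β x t : ℝ) : ℝ :=
  D2 x t + 2 * α * t * (3 * x ^ 2 - t ^ 2 - 9) - 2 * β * x * (x ^ 2 - 3 * t ^ 2 - 3)
    + α ^ 2 + β ^ 2

/-- The generalised rational solution `ψ̂₂(x,t;α,β)` of the focusing NLS equation. -/
noncomputable def psi2hat (α β : ℝ) (x t : ℝ) : ℂ :=
  (1 - 12 * (((G2hat α β x t : ℝ) : ℂ) + Complex.I * ((H2hat α β x t : ℝ) : ℂ))
      / ((D2hat α β x t : ℝ) : ℂ)) * Complex.exp (Complex.I * (t : ℂ) / 2)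

/-!
Write `ψ = u · e^{it/2}`. The phase is independent of `x` and has modulus one, so the NLS expression
of `ψ` is `(i u_t + u_xx + ½ (|u|² - 1) u) · e^{it/2}`. For `u = 1 - 12 (G + iH) / D` with real
`G, H, D`, multiplying the bracket by `2 D³` clears all denominators and leaves `R + i Q`, where `R`
and `Q` are polynomials in `G, H, D` and their derivatives `∂ₜ, ∂ₓ, ∂ₓ²`. For `Ĝ₂, Ĥ₂, D̂₂` both
vanish identically.
-/

open Complex Filter Function Topology

noncomputable def dX (f : ℝ → ℝ → ℝ) : ℝ → ℝ → ℝ := fun x t => deriv (f · t) x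

noncomputable def dT (f : ℝ → ℝ → ℝ) : ℝ → ℝ → ℝ := fun x t => deriv (f x ·) t

section PartialDerivatives

variable {f : ℝ → ℝ → ℝ}

theorem hasDerivAt_dT (hf : Differentiable ℝ (uncurry f)) (x t : ℝ) :
    HasDerivAt (f x ·) (dT f x t) t :=
  (hf.comp ((differentiable_const x).prodMk differentiable_id) t).hasDerivAt

theorem hasDerivAt_dX (hf : Differentiable ℝ (uncurry f)) (x t : ℝ) :
    HasDerivAt (f · t) (dX f x t) x :=
  (hf.comp (differentiable_id.prodMk (differentiable_const t)) x).hasDerivAt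

theorem hasDerivAt_dX_dX (hf : ContDiff ℝ 2 (uncurry f)) (x t : ℝ) :
    HasDerivAt (dX f · t) (dX (dX f) x t) x :=
  ((hf.comp (contDiff_id.prodMk contDiff_const)).differentiable_deriv_two x).hasDerivAt

end PartialDerivatives

theorem hasDerivAt_deriv_div {𝕜 𝕜' : Type*} [NontriviallyNormedField 𝕜]
    [NontriviallyNormedField 𝕜'] [NormedAlgebra 𝕜 𝕜'] {f g f' g' : 𝕜 → 𝕜'} {f'' g'' : 𝕜'}
    {x : 𝕜} (hf : ∀ y, HasDerivAt f (f' y) y) (hg : ∀ y, HasDerivAt g (g' y) y)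
    (hf' : HasDerivAt f' f'' x) (hg' : HasDerivAt g' g'' x) (hx : g x ≠ 0) :
    HasDerivAt (deriv fun y => f y / g y)
      (((f'' * g x - f x * g'') * g x - 2 * g' x * (f' x * g x - f x * g' x)) / g x ^ 3) x := by
  have hquot : deriv (fun y => f y / g y) =ᶠ[𝓝 x] fun y => (f' y * g y - f y * g' y) / g y ^ 2 :=
    ((hg x).continuousAt.eventually_ne hx).mono fun y hy => ((hf y).div (hg y) hy).deriv
  refine ((((hf'.mul (hg x)).sub ((hf x).mul hg')).div ((hg x).pow 2) (pow_ne_zero 2 hx))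
    |>.congr_of_eventuallyEq hquot).congr_deriv ?_
  simp only [Pi.mul_apply, Pi.sub_apply, Pi.pow_apply]
  field_simp
  ring

noncomputable def withPhase (u : ℝ → ℝ → ℂ) : ℝ → ℝ → ℂ := fun x t => u x t * cexp (I * t / 2)

noncomputable def nlsResidue (ψ : ℝ → ℝ → ℂ) (x t : ℝ) : ℂ :=
  I * dTC ψ x t + dXC (dXC ψ) x t + 1 / 2 * (‖ψ x t‖ : ℂ) ^ 2 * ψ x t

theorem dXC_withPhase (u : ℝ → ℝ → ℂ) : dXC (withPhase u) = withPhase (dXC u) := by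
  funext x t
  exact deriv_mul_const_field _

theorem hasDerivAt_phase (t : ℝ) :
    HasDerivAt (fun s : ℝ => cexp (I * s / 2)) (I / 2 * cexp (I * t / 2)) t := by
  convert (((hasDerivAt_id' t).ofReal_comp.const_mul I).div_const 2).cexp using 1
  push_cast
  ring

theorem norm_phase (t : ℝ) : ‖cexp (I * t / 2)‖ = 1 := by
  simpa [mul_comm, mul_div_assoc] using norm_exp_ofReal_mul_I (t / 2)

theorem nlsResidue_withPhase (u : ℝ → ℝ → ℂ) {x t : ℝ} {ut : ℂ}
    (hu : HasDerivAt (u x ·) ut t) :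
    nlsResidue (withPhase u) x t =
      (I * ut + dXC (dXC u) x t + 1 / 2 * ((‖u x t‖ : ℂ) ^ 2 - 1) * u x t) * cexp (I * t / 2) := by
  have hdt : dTC (withPhase u) x t =
      ut * cexp (I * t / 2) + u x t * (I / 2 * cexp (I * t / 2)) :=
    (hu.mul (hasDerivAt_phase t)).deriv
  simp only [nlsResidue, hdt, dXC_withPhase]
  simp only [withPhase, norm_mul, norm_phase, mul_one]
  linear_combination u x t * cexp (I * t / 2) / 2 * I_sq

section RationalAmplitude

noncomputable def rationalAmplitude (G H D : ℝ → ℝ → ℝ) (x t : ℝ) : ℂ :=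
  1 - 12 * ((G x t : ℂ) + I * (H x t : ℂ)) / (D x t : ℂ)

noncomputable def nlsResidueRe (G H D : ℝ → ℝ → ℝ) : ℝ → ℝ → ℝ :=
  24 * D * (dT H * D - H * dT D)
    - 24 * ((dX (dX G) * D - G * dX (dX D)) * D - 2 * dX D * (dX G * D - G * dX D))
    + ((D - 12 * G) ^ 2 + 144 * H ^ 2 - D ^ 2) * (D - 12 * G)

noncomputable def nlsResidueIm (G H D : ℝ → ℝ → ℝ) : ℝ → ℝ → ℝ :=
  -24 * D * (dT G * D - G * dT D)
    - 24 * ((dX (dX H) * D - H * dX (dX D)) * D - 2 * dX D * (dX H * D - H * dX D))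
    - 12 * H * ((D - 12 * G) ^ 2 + 144 * H ^ 2 - D ^ 2)

variable {G H D : ℝ → ℝ → ℝ} {x t : ℝ}

theorem sq_norm_rationalAmplitude (hx : D x t ≠ 0) :
    (‖rationalAmplitude G H D x t‖ : ℂ) ^ 2 =
      (((D x t - 12 * G x t) ^ 2 + 144 * H x t ^ 2) / D x t ^ 2 : ℝ) := by
  have hx' : (D x t : ℂ) ≠ 0 := ofReal_ne_zero.2 hx
  have hreim : rationalAmplitude G H D x t =
      ((D x t - 12 * G x t) / D x t : ℝ) + ((-12 * H x t) / D x t : ℝ) * I := by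
    simp only [rationalAmplitude]
    push_cast
    field_simp
    ring
  rw [hreim, ← ofReal_pow, Complex.sq_norm, normSq_add_mul_I]
  congr 1
  field_simp
  ring

theorem hasDerivAt_rationalAmplitude_dT (hG : Differentiable ℝ (uncurry G))
    (hH : Differentiable ℝ (uncurry H)) (hD : Differentiable ℝ (uncurry D)) (hx : D x t ≠ 0) :
    HasDerivAt (rationalAmplitude G H D x ·)
      (-((12 * ((dT G x t : ℂ) + I * dT H x t) * D x t
        - 12 * ((G x t : ℂ) + I * H x t) * dT D x t) / (D x t : ℂ) ^ 2)) t := by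
  have hN := (((hasDerivAt_dT hG x t).ofReal_comp.fun_add
    ((hasDerivAt_dT hH x t).ofReal_comp.const_mul I)).const_mul (12 : ℂ))
  exact (hN.div (hasDerivAt_dT hD x t).ofReal_comp (ofReal_ne_zero.2 hx)).const_sub 1

theorem dXC_dXC_rationalAmplitude (hG : ContDiff ℝ 2 (uncurry G))
    (hH : ContDiff ℝ 2 (uncurry H)) (hD : ContDiff ℝ 2 (uncurry D)) (hx : D x t ≠ 0) :
    dXC (dXC (rationalAmplitude G H D)) x t =
      -(((12 * ((dX (dX G) x t : ℂ) + I * dX (dX H) x t) * D x t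
          - 12 * ((G x t : ℂ) + I * H x t) * dX (dX D) x t) * D x t
        - 2 * dX D x t * (12 * ((dX G x t : ℂ) + I * dX H x t) * D x t
          - 12 * ((G x t : ℂ) + I * H x t) * dX D x t)) / (D x t : ℂ) ^ 3) := by
  have hC1 {f : ℝ → ℝ → ℝ} (hf : ContDiff ℝ 2 (uncurry f)) : Differentiable ℝ (uncurry f) :=
    hf.differentiable two_ne_zero
  have hN y := (((hasDerivAt_dX (hC1 hG) y t).ofReal_comp.fun_add
    ((hasDerivAt_dX (hC1 hH) y t).ofReal_comp.const_mul I)).const_mul (12 : ℂ))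
  have hN' := (((hasDerivAt_dX_dX hG x t).ofReal_comp.fun_add
    ((hasDerivAt_dX_dX hH x t).ofReal_comp.const_mul I)).const_mul (12 : ℂ))
  have hquot := hasDerivAt_deriv_div hN (fun y => (hasDerivAt_dX (hC1 hD) y t).ofReal_comp) hN'
    (hasDerivAt_dX_dX hD x t).ofReal_comp (ofReal_ne_zero.2 hx)
  have hfirst : (dXC (rationalAmplitude G H D) · t) =
      -deriv fun y => 12 * ((G y t : ℂ) + I * H y t) / D y t := by
    funext y
    exact deriv_const_sub 1
  simp only [dXC] at hfirst ⊢
  rw [hfirst, deriv.neg, hquot.deriv]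

theorem two_mul_cube_mul_nlsResidue_withPhase_rationalAmplitude
    (hG : ContDiff ℝ 2 (uncurry G)) (hH : ContDiff ℝ 2 (uncurry H))
    (hD : ContDiff ℝ 2 (uncurry D)) (hx : D x t ≠ 0) :
    2 * (D x t : ℂ) ^ 3 * nlsResidue (withPhase (rationalAmplitude G H D)) x t =
      (nlsResidueRe G H D x t + I * nlsResidueIm G H D x t) * cexp (I * t / 2) := by
  have hx' : (D x t : ℂ) ≠ 0 := ofReal_ne_zero.2 hx
  rw [nlsResidue_withPhase _ (hasDerivAt_rationalAmplitude_dT (hG.differentiable two_ne_zero)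
      (hH.differentiable two_ne_zero) (hD.differentiable two_ne_zero) hx),
    dXC_dXC_rationalAmplitude hG hH hD hx, sq_norm_rationalAmplitude hx, rationalAmplitude]
  simp only [nlsResidueRe, nlsResidueIm, Pi.add_apply, Pi.sub_apply, Pi.mul_apply, Pi.pow_apply,
    Pi.neg_apply, Pi.ofNat_apply]
  push_cast
  field_simp
  linear_combination (-24 * (D x t : ℂ) * (D x t * dT H x t - H x t * dT D x t)) * I_sq

end RationalAmplitude

section Psi2hat

variable (α β : ℝ)

theorem psi2hat_eq_withPhase :
    psi2hat α β = withPhase (rationalAmplitude (G2hat α β) (H2hat α β) (D2hat α β)) :=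
  rfl

theorem contDiff_G2hat {n : WithTop ℕ∞} : ContDiff ℝ n (uncurry (G2hat α β)) := by
  unfold G2hat G2
  fun_prop

theorem contDiff_H2hat {n : WithTop ℕ∞} : ContDiff ℝ n (uncurry (H2hat α β)) := by
  unfold H2hat H2
  fun_prop

theorem contDiff_D2hat {n : WithTop ℕ∞} : ContDiff ℝ n (uncurry (D2hat α β)) := by
  unfold D2hat D2
  fun_prop

theorem nlsResidueRe_G2hat_H2hat_D2hat :
    nlsResidueRe (G2hat α β) (H2hat α β) (D2hat α β) = 0 := by
  funext x t
  simp (disch := fun_prop) [nlsResidueRe, dX, dT, G2hat, G2, H2hat, H2, D2hat, D2]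
  ring

theorem nlsResidueIm_G2hat_H2hat_D2hat :
    nlsResidueIm (G2hat α β) (H2hat α β) (D2hat α β) = 0 := by
  funext x t
  simp (disch := fun_prop) [nlsResidueIm, dX, dT, G2hat, G2, H2hat, H2, D2hat, D2]
  ring

end Psi2hat

theorem psi2hat_solves_NLS (α β : ℝ) :
    ∀ x t : ℝ, D2hat α β x t ≠ 0 →
      Complex.I * dTC (psi2hat α β) x t + dXC (dXC (psi2hat α β)) x t
        + (1 / 2) * ((‖psi2hat α β x t‖ : ℂ)) ^ 2 * psi2hat α β x t = 0 := by
  intro x t hx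
  have key := two_mul_cube_mul_nlsResidue_withPhase_rationalAmplitude
    (contDiff_G2hat α β) (contDiff_H2hat α β) (contDiff_D2hat α β) hx
  rw [← psi2hat_eq_withPhase, nlsResidueRe_G2hat_H2hat_D2hat,
    nlsResidueIm_G2hat_H2hat_D2hat] at key
  simpa [nlsResidue, hx] using key
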